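/- arXiv:2408.11684 — 8 statements merged into one kernel-verified Lean document; each statement's English description precedes it below -/
import Mathlib

section
/- Let λ_1 ≥ λ_2 ≥ ⋯ ≥ λ_{3n} ≥ 0 be real numbers satisfying λ_{3n} + λ_{3n-1} ≥ λ_1. Then the 3×3 symmetric matrix Λ with diagonal (2λ_{3n}, 2λ_{3n-2}, 2λ_{3n-5}) and off-diagonal entries Λ_{12} = λ_{3n-1} − λ_1, Λ_{13} = λ_{3n-3} − λ_2, Λ_{23} = λ_{3n-4} − λ_3 is positive semidefinite. -/
/-!
The hypothesis `λ_{3n} + λ_{3n-1} ≥ λ_1` says that `λ_1, …, λ_{3n-1}` lie in an interval of length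
at most `λ_{3n}`, so every off-diagonal entry of `Λ` has absolute value at most `λ_{3n}`, which is at
most half of every diagonal entry. Hence `Λ` is weakly diagonally dominant, and a symmetric real
weakly diagonally dominant matrix is positive semidefinite: bounding
`2 x_i a_ij x_j ≥ -|a_ij| (x_i² + x_j²)` for `i ≠ j` bounds the quadratic form below by
`∑ i, (a_ii - ∑ j ≠ i, |a_ij|) x_i²`.
-/
open Finset

theorem neg_abs_mul_add_sq_le (a x y : ℝ) : -(|a| * (x ^ 2 + y ^ 2)) ≤ 2 * (x * a * y) := by
  rcases abs_cases a with ⟨h, ha⟩ | ⟨h, ha⟩ <;> rw [h]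
  · nlinarith [mul_nonneg ha (sq_nonneg (x + y))]
  · nlinarith [mul_nonneg (neg_nonneg.mpr ha.le) (sq_nonneg (x - y))]

namespace Matrix

variable {n : Type*} [Fintype n]

theorem sum_sum_abs_mul_add_sq_of_isSymm {A : Matrix n n ℝ} (hA : A.IsSymm) (x : n → ℝ) :
    ∑ i, ∑ j, |A i j| * (x i ^ 2 + x j ^ 2) = 2 * ∑ i, (∑ j, |A i j|) * x i ^ 2 := by
  have hswap : ∑ i, ∑ j, |A i j| * x j ^ 2 = ∑ i, ∑ j, |A i j| * x i ^ 2 := by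
    rw [sum_comm]
    simp only [hA.apply]
  simp only [mul_add, sum_add_distrib, hswap, sum_mul]
  ring

theorem posSemidef_of_sum_row_le_diag [DecidableEq n] {A : Matrix n n ℝ} (hA : A.IsSymm)
    (hdom : ∀ k, ∑ j ∈ univ.erase k, |A k j| ≤ A k k) : A.PosSemidef := by
  have hdiag : ∀ k, 0 ≤ A k k := fun k => (sum_nonneg fun j _ => abs_nonneg _).trans (hdom k)
  have hrow : ∀ k, ∑ j, |A k j| ≤ 2 * A k k := fun k => by
    rw [← add_sum_erase _ _ (mem_univ k), abs_of_nonneg (hdiag k)]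
    linarith [hdom k]
  have hpair : ∀ x : n → ℝ, ∀ i j, (if i = j then 4 * (A i i * x i ^ 2) else 0) ≤
      2 * (x i * (A i j * x j)) + |A i j| * (x i ^ 2 + x j ^ 2) := fun x i j => by
    split_ifs with hij
    · subst hij
      rw [abs_of_nonneg (hdiag i)]
      exact le_of_eq (by ring)
    · linarith [neg_abs_mul_add_sq_le (A i j) (x i) (x j), mul_assoc (x i) (A i j) (x j)]
  refine PosSemidef.of_dotProduct_mulVec_nonneg (isHermitian_iff_isSymm.mpr hA) fun x => ?_
  have hsum := sum_le_sum fun i (_ : i ∈ univ) => sum_le_sum fun j (_ : j ∈ univ) => hpair x i j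
  simp only [sum_ite_eq, mem_univ, if_true, sum_add_distrib, ← mul_sum,
    sum_sum_abs_mul_add_sq_of_isSymm hA] at hsum
  have hweights : ∑ i, (∑ j, |A i j|) * x i ^ 2 ≤ 2 * ∑ i, A i i * x i ^ 2 := by
    rw [mul_sum]
    exact sum_le_sum fun i _ => (mul_le_mul_of_nonneg_right (hrow i) (sq_nonneg _)).trans_eq
      (mul_assoc _ _ _)
  have hquad : star x ⬝ᵥ (A *ᵥ x) = ∑ i, x i * ∑ j, A i j * x j := by
    simp [dotProduct, mulVec]
  linarith

end Matrix

theorem hildebrand_first_posSemidef_general (n : ℕ) (hn : 2 ≤ n) (lam : ℕ → ℝ)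
    (hmono : ∀ i j, 1 ≤ i → i ≤ j → j ≤ 3*n → lam j ≤ lam i)
    (h : lam (3*n) + lam (3*n-1) ≥ lam 1) :
    (!![2*lam (3*n),            lam (3*n-1) - lam 1,  lam (3*n-3) - lam 2;
        lam (3*n-1) - lam 1,    2*lam (3*n-2),        lam (3*n-4) - lam 3;
        lam (3*n-3) - lam 2,    lam (3*n-4) - lam 3,  2*lam (3*n-5)]).PosSemidef := by
  have hspread : ∀ k l, 1 ≤ k → k < 3*n → 1 ≤ l → l < 3*n → |lam k - lam l| ≤ lam (3*n) := by
    intro k l hk hk' hl hl'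
    have := abs_sub_le_of_le_of_le (hmono k (3*n-1) hk (by omega) (by omega))
      (hmono 1 k le_rfl hk (by omega)) (hmono l (3*n-1) hl (by omega) (by omega))
      (hmono 1 l le_rfl hl (by omega))
    linarith
  have h2 : lam (3*n) ≤ lam (3*n-2) := hmono _ _ (by omega) (by omega) le_rfl
  have h5 : lam (3*n) ≤ lam (3*n-5) := hmono _ _ (by omega) (by omega) le_rfl
  have hp := hspread (3*n-1) 1 (by omega) (by omega) le_rfl (by omega)
  have hq := hspread (3*n-3) 2 (by omega) (by omega) (by omega) (by omega)
  have hr := hspread (3*n-4) 3 (by omega) (by omega) (by omega) (by omega)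
  refine Matrix.posSemidef_of_sum_row_le_diag ?_ fun k => ?_
  · ext i j
    fin_cases i <;> fin_cases j <;> rfl
  · fin_cases k <;>
      simp only [Fin.zero_eta, Fin.mk_one, Fin.reduceFinMk, Fin.isValue, Matrix.of_apply,
        Matrix.cons_val', Matrix.cons_val_zero, Matrix.cons_val_one, Matrix.cons_val_fin_one,
        Matrix.cons_val, mem_univ, sum_erase_eq_sub, Fin.sum_univ_three] <;>
      linarith

/-- First Hildebrand matrix for qutrit-qudit absolute PPT is PSD under
λ_{3n} + λ_{3n-1} ≥ λ_1. -/
theorem hildebrand_first_posSemidef (n : ℕ) (hn : 2 ≤ n) (lam : ℕ → ℝ)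
    (hmono : ∀ i j, 1 ≤ i → i ≤ j → j ≤ 3*n → lam j ≤ lam i)
    (hnonneg : ∀ i, 1 ≤ i → i ≤ 3*n → 0 ≤ lam i)
    (h : lam (3*n) + lam (3*n-1) ≥ lam 1) :
    (!![2*lam (3*n),            lam (3*n-1) - lam 1,  lam (3*n-3) - lam 2;
        lam (3*n-1) - lam 1,    2*lam (3*n-2),        lam (3*n-4) - lam 3;
        lam (3*n-3) - lam 2,    lam (3*n-4) - lam 3,  2*lam (3*n-5)]).PosSemidef :=
  hildebrand_first_posSemidef_general n hn lam hmono h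
end

section
/- Let λ_1 ≥ λ_2 ≥ ⋯ ≥ λ_{3n} ≥ 0 be real numbers satisfying λ_{3n} + λ_{3n-1} ≥ λ_1. Then the 3×3 symmetric matrix Λ with diagonal (2λ_{3n}, 2λ_{3n-3}, 2λ_{3n-5}) and off-diagonal entries Λ_{12} = λ_{3n-1} − λ_1, Λ_{13} = λ_{3n-2} − λ_2, Λ_{23} = λ_{3n-4} − λ_3 is positive semidefinite. -/
/-! The matrix is weakly diagonally dominant with nonnegative diagonal, so by Gershgorin's circle
theorem all its eigenvalues are nonnegative. -/

open Matrix
open scoped ComplexOrder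

theorem Matrix.IsHermitian.posSemidef_of_sum_norm_le {𝕜 n : Type*} [RCLike 𝕜] [Fintype n]
    [DecidableEq n] {A : Matrix n n 𝕜} (hA : A.IsHermitian)
    (hdom : ∀ k, ∑ j ∈ Finset.univ.erase k, ‖A k j‖ ≤ RCLike.re (A k k)) : A.PosSemidef := by
  refine hA.posSemidef_iff_eigenvalues_nonneg.mpr fun i => show 0 ≤ hA.eigenvalues i from ?_
  have hμ : Module.End.HasEigenvalue (toLin' A) (hA.eigenvalues i : 𝕜) := by
    refine Module.End.hasEigenvalue_of_hasEigenvector (x := ⇑(hA.eigenvectorBasis i)) ⟨?_, ?_⟩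
    · rw [Module.End.mem_eigenspace_iff, toLin'_apply, hA.mulVec_eigenvectorBasis,
        RCLike.real_smul_eq_coe_smul (K := 𝕜)]
    · exact fun h => (hA.eigenvectorBasis.orthonormal.ne_zero i) (by ext j; simpa using congrFun h j)
  obtain ⟨k, hk⟩ := eigenvalue_mem_ball hμ
  rw [Metric.mem_closedBall, dist_eq_norm] at hk
  have hre := RCLike.re_le_norm (A k k - hA.eigenvalues i)
  simp only [map_sub, RCLike.ofReal_re] at hre
  linarith [hdom k, norm_sub_rev (A k k) (hA.eigenvalues i : 𝕜)]

theorem Matrix.posSemidef_of_abs_le {a b c d e f : ℝ}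
    (h₁ : |d| + |e| ≤ a) (h₂ : |d| + |f| ≤ b) (h₃ : |e| + |f| ≤ c) :
    (!![a, d, e; d, b, f; e, f, c]).PosSemidef := by
  refine IsHermitian.posSemidef_of_sum_norm_le ?_ fun k => ?_
  · ext i j
    fin_cases i <;> fin_cases j <;> rfl
  · fin_cases k <;> simp [Finset.sum_erase_eq_sub, Fin.sum_univ_three] <;> linarith

theorem hildebrand_second_posSemidef_general (n : ℕ) (hn : 2 ≤ n) (lam : ℕ → ℝ)
    (hmono : ∀ i j, 1 ≤ i → i ≤ j → j ≤ 3*n → lam j ≤ lam i)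
    (h : lam (3*n) + lam (3*n-1) ≥ lam 1) :
    (!![2*lam (3*n),            lam (3*n-1) - lam 1,  lam (3*n-2) - lam 2;
        lam (3*n-1) - lam 1,    2*lam (3*n-3),        lam (3*n-4) - lam 3;
        lam (3*n-2) - lam 2,    lam (3*n-4) - lam 3,  2*lam (3*n-5)]).PosSemidef := by
  have hle (i j : ℕ) (hij : 1 ≤ i ∧ i ≤ j ∧ j ≤ 3*n) : lam j ≤ lam i :=
    hmono i j hij.1 hij.2.1 hij.2.2
  have := hle 1 2 (by omega); have := hle 1 3 (by omega); have := hle 2 (3*n-2) (by omega)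
  have := hle 1 (3*n-4) (by omega); have := hle 3 (3*n) (by omega)
  have := hle (3*n-4) (3*n-1) (by omega); have := hle (3*n-2) (3*n-1) (by omega)
  have := hle (3*n-5) (3*n-3) (by omega); have := hle (3*n-3) (3*n-1) (by omega)
  have := hle (3*n-1) (3*n) (by omega)
  -- Each off-diagonal entry lies within `lam 1 - lam (3n-1) ≤ lam (3n)` or
  -- `lam 1 - lam (3n) ≤ lam (3n-1)` of zero: this is where the hypothesis `h` enters.
  have hd : |lam (3*n-1) - lam 1| ≤ lam (3*n) := abs_le.mpr ⟨by linarith, by linarith⟩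
  have he : |lam (3*n-2) - lam 2| ≤ lam (3*n) := abs_le.mpr ⟨by linarith, by linarith⟩
  have hf : |lam (3*n-4) - lam 3| ≤ lam (3*n-1) := abs_le.mpr ⟨by linarith, by linarith⟩
  exact posSemidef_of_abs_le (by linarith) (by linarith) (by linarith)

/-- Second Hildebrand matrix for qutrit-qudit absolute PPT is PSD under
λ_{3n} + λ_{3n-1} ≥ λ_1. -/
theorem hildebrand_second_posSemidef (n : ℕ) (hn : 2 ≤ n) (lam : ℕ → ℝ)
    (hmono : ∀ i j, 1 ≤ i → i ≤ j → j ≤ 3*n → lam j ≤ lam i)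
    (hnonneg : ∀ i, 1 ≤ i → i ≤ 3*n → 0 ≤ lam i)
    (h : lam (3*n) + lam (3*n-1) ≥ lam 1) :
    (!![2*lam (3*n),            lam (3*n-1) - lam 1,  lam (3*n-2) - lam 2;
        lam (3*n-1) - lam 1,    2*lam (3*n-3),        lam (3*n-4) - lam 3;
        lam (3*n-2) - lam 2,    lam (3*n-4) - lam 3,  2*lam (3*n-5)]).PosSemidef :=
  hildebrand_second_posSemidef_general n hn lam hmono h
end

section
/- Let λ_1 ≥ λ_2 ≥ ⋯ ≥ λ_{4n} ≥ 0 be real numbers (n ≥ 4) satisfying λ_{4n} + λ_{4n-1} + λ_{4n-2} + λ_{4n-3} ≥ λ_1 + λ_2 + λ_3. Then the 4×4 symmetric matrix Λ_1 with diagonal (2λ_{4n}, 2λ_{4n-4}, 2λ_{4n-7}, 2λ_{4n-9}) and off-diagonal entries (Λ_1)_{12} = λ_{4n-1} − λ_1, (Λ_1)_{13} = λ_{4n-2} − λ_2, (Λ_1)_{14} = λ_{4n-3} − λ_3, (Λ_1)_{23} = λ_{4n-5} − λ_4, (Λ_1)_{24} = λ_{4n-6} − λ_5, (Λ_1)_{34}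 = λ_{4n-8} − λ_6 is positive semidefinite. -/
/-!
By monotonicity every off-diagonal entry is `≤ 0`, and every row sum dominates the first one,
`λ_{4n} + (λ_{4n} + λ_{4n-1} + λ_{4n-2} + λ_{4n-3} - λ_1 - λ_2 - λ_3)`, which is `≥ 0` because the
hypothesis together with `λ_{4n-k} ≤ λ_k` forces `λ_{4n} ≥ 0`. A symmetric matrix with
nonpositive off-diagonal entries and nonnegative row sums is weakly diagonally dominant, so by
Gershgorin's circle theorem its eigenvalues are nonnegative.
-/

open Matrix Finset
open scoped ComplexOrder

theorem Matrix.IsHermitian.posSemidef_of_sum_norm_le_re_diag {𝕜 n : Type*} [RCLike 𝕜]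
    [Fintype n] [DecidableEq n] {A : Matrix n n 𝕜} (hA : A.IsHermitian)
    (hdom : ∀ i, ∑ j ∈ univ.erase i, ‖A i j‖ ≤ RCLike.re (A i i)) : A.PosSemidef := by
  refine hA.posSemidef_iff_eigenvalues_nonneg.mpr fun i => show (0 : ℝ) ≤ _ from ?_
  have hμ : Module.End.HasEigenvalue (toLin' A) (hA.eigenvalues i : 𝕜) := by
    rw [Module.End.hasEigenvalue_iff_mem_spectrum, spectrum_toLin',
      ← RCLike.algebraMap_eq_ofReal, spectrum.algebraMap_mem_iff]
    exact hA.eigenvalues_mem_spectrum_real i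
  obtain ⟨k, hk⟩ := eigenvalue_mem_ball hμ
  rw [Metric.mem_closedBall, dist_comm, dist_eq_norm] at hk
  have hre := (RCLike.re_le_norm (A k k - hA.eigenvalues i)).trans hk
  rw [map_sub, RCLike.ofReal_re] at hre
  linarith [hdom k]

theorem Matrix.IsHermitian.posSemidef_of_offDiag_nonpos_of_sum_nonneg {n : Type*} [Fintype n]
    [DecidableEq n] {A : Matrix n n ℝ} (hA : A.IsHermitian) (hoff : ∀ i j, i ≠ j → A i j ≤ 0)
    (hrow : ∀ i, 0 ≤ ∑ j, A i j) : A.PosSemidef := by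
  refine hA.posSemidef_of_sum_norm_le_re_diag fun i => ?_
  have hnorm : ∀ j ∈ univ.erase i, ‖A i j‖ = -A i j := fun j hj => by
    rw [Real.norm_eq_abs, abs_of_nonpos (hoff i j (ne_of_mem_erase hj).symm)]
  rw [sum_congr rfl hnorm, sum_neg_distrib, sum_erase_eq_sub (mem_univ i), RCLike.re_to_real]
  linarith [hrow i]

theorem lambda1_posSemidef_general (n : ℕ) (hn : 4 ≤ n) (lam : ℕ → ℝ)
    (hmono : ∀ i j, 1 ≤ i → i ≤ j → j ≤ 4*n → lam j ≤ lam i)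
    (h : lam (4*n) + lam (4*n-1) + lam (4*n-2) + lam (4*n-3) ≥ lam 1 + lam 2 + lam 3) :
    (!![2*lam (4*n),           lam (4*n-1) - lam 1,  lam (4*n-2) - lam 2,  lam (4*n-3) - lam 3;
        lam (4*n-1) - lam 1,   2*lam (4*n-4),        lam (4*n-5) - lam 4,  lam (4*n-6) - lam 5;
        lam (4*n-2) - lam 2,   lam (4*n-5) - lam 4,  2*lam (4*n-7),        lam (4*n-8) - lam 6;
        lam (4*n-3) - lam 3,   lam (4*n-6) - lam 5,  lam (4*n-8) - lam 6,  2*lam (4*n-9)]).PosSemidef := by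
  obtain ⟨_, _, _, _, _, _⟩ : lam (4*n-1) ≤ lam 1 ∧ lam (4*n-2) ≤ lam 2 ∧ lam (4*n-3) ≤ lam 3 ∧
      lam (4*n-5) ≤ lam 4 ∧ lam (4*n-6) ≤ lam 5 ∧ lam (4*n-8) ≤ lam 6 := by
    and_intros <;> apply hmono <;> omega
  obtain ⟨_, _, _, _, _, _, _, _, _, _, _, _, _⟩ :
      lam 2 ≤ lam 1 ∧ lam 3 ≤ lam 2 ∧ lam 4 ≤ lam 2 ∧ lam 5 ≤ lam 3 ∧ lam 6 ≤ lam 3 ∧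
      lam (4*n-1) ≤ lam (4*n-2) ∧ lam (4*n-2) ≤ lam (4*n-3) ∧ lam (4*n-2) ≤ lam (4*n-5) ∧
      lam (4*n-3) ≤ lam (4*n-6) ∧ lam (4*n-3) ≤ lam (4*n-8) ∧
      lam (4*n) ≤ lam (4*n-4) ∧ lam (4*n) ≤ lam (4*n-7) ∧ lam (4*n) ≤ lam (4*n-9) := by
    and_intros <;> apply hmono <;> omega
  refine IsHermitian.posSemidef_of_offDiag_nonpos_of_sum_nonneg ?_ (fun i j hij => ?_)
    (fun i => ?_)
  · ext i j
    fin_cases i <;> fin_cases j <;> rfl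
  · fin_cases i <;> fin_cases j <;>
      simp only [Fin.zero_eta, Fin.mk_one, Fin.reduceFinMk, Fin.isValue, of_apply,
        Matrix.cons_val, cons_val_zero, cons_val_one, ne_eq, not_true_eq_false] at hij ⊢ <;>
      linarith
  · fin_cases i <;>
      simp only [Fin.sum_univ_four, Fin.zero_eta, Fin.mk_one, Fin.reduceFinMk, Fin.isValue,
        of_apply, Matrix.cons_val, cons_val_zero, cons_val_one] <;>
      linarith

/-- The matrix Λ₁ of the ququart-qudit criterion is PSD when
λ_{4n}+λ_{4n-1}+λ_{4n-2}+λ_{4n-3} ≥ λ_1+λ_2+λ_3. -/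
theorem lambda1_posSemidef (n : ℕ) (hn : 4 ≤ n) (lam : ℕ → ℝ)
    (hmono : ∀ i j, 1 ≤ i → i ≤ j → j ≤ 4*n → lam j ≤ lam i)
    (hnonneg : ∀ i, 1 ≤ i → i ≤ 4*n → 0 ≤ lam i)
    (h : lam (4*n) + lam (4*n-1) + lam (4*n-2) + lam (4*n-3) ≥ lam 1 + lam 2 + lam 3) :
    (!![2*lam (4*n),           lam (4*n-1) - lam 1,  lam (4*n-2) - lam 2,  lam (4*n-3) - lam 3;
        lam (4*n-1) - lam 1,   2*lam (4*n-4),        lam (4*n-5) - lam 4,  lam (4*n-6) - lam 5;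
        lam (4*n-2) - lam 2,   lam (4*n-5) - lam 4,  2*lam (4*n-7),        lam (4*n-8) - lam 6;
        lam (4*n-3) - lam 3,   lam (4*n-6) - lam 5,  lam (4*n-8) - lam 6,  2*lam (4*n-9)]).PosSemidef :=
  lambda1_posSemidef_general n hn lam hmono h
end

section
/- Let m, n be integers with 2 ≤ m ≤ n, and let λ_1 ≥ λ_2 ≥ ⋯ ≥ λ_{mn} ≥ 0 satisfy λ_{mn} + λ_{mn-1} + ⋯ + λ_{m(n-1)+1} ≥ λ_1 + λ_2 + ⋯ + λ_{m-1}. Then λ_{m(n-1)+1} / λ_{m-1} ≥ (m-1)/m whenever λ_{m-1} > 0. -/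
/-!
Each of the last `m` values is at most `λ_{m(n-1)+1}` and each of the first `m - 1` is at least
`λ_{m-1}`, so the sum condition gives `(m - 1) λ_{m-1} ≤ m λ_{m(n-1)+1}`.
-/

open Finset

section AntitoneOn

variable {M : Type*} [AddCommMonoid M] [PartialOrder M] [IsOrderedAddMonoid M] {f : ℕ → M}
  {a b : ℕ}

theorem sum_Icc_le_nsmul_left_of_antitoneOn (hf : AntitoneOn f (Set.Icc a b)) :
    ∑ j ∈ Icc a b, f j ≤ (b + 1 - a) • f a := by
  rw [← Nat.card_Icc]
  refine sum_le_card_nsmul _ _ _ fun j hj => ?_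
  have hj' : j ∈ Set.Icc a b := by simpa using hj
  exact hf ⟨le_rfl, hj'.1.trans hj'.2⟩ hj' hj'.1

theorem nsmul_right_le_sum_Icc_of_antitoneOn (hf : AntitoneOn f (Set.Icc a b)) :
    (b + 1 - a) • f b ≤ ∑ j ∈ Icc a b, f j := by
  rw [← Nat.card_Icc]
  refine card_nsmul_le_sum _ _ _ fun j hj => ?_
  have hj' : j ∈ Set.Icc a b := by simpa using hj
  exact hf hj' ⟨hj'.1.trans hj'.2, le_rfl⟩ hj'.2

end AntitoneOn

theorem eigenvalue_ratio_bound_general (m n : ℕ) (hm : 2 ≤ m) (hmn : m ≤ n) (lam : ℕ → ℝ)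
    (hmono : ∀ i j, 1 ≤ i → i ≤ j → j ≤ m*n → lam j ≤ lam i)
    (hsum : ∑ j ∈ Finset.Icc (m*(n-1)+1) (m*n), lam j ≥ ∑ j ∈ Finset.Icc 1 (m-1), lam j)
    (hpos : 0 < lam (m-1)) :
    lam (m*(n-1)+1) / lam (m-1) ≥ ((m:ℝ)-1)/(m:ℝ) := by
  obtain ⟨k, rfl⟩ : ∃ k, n = k + 1 := Nat.exists_eq_add_one.mpr (by omega)
  have hanti : AntitoneOn lam (Set.Icc 1 (m * (k + 1))) :=
    fun i hi j hj hij => hmono i j hi.1 hij hj.2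
  have hlast : ∑ j ∈ Icc (m * k + 1) (m * (k + 1)), lam j ≤ m * lam (m * k + 1) := by
    have h := sum_Icc_le_nsmul_left_of_antitoneOn
      (hanti.mono (Set.Icc_subset_Icc_left (Nat.le_add_left 1 (m * k))))
    rwa [mul_add_one, show m * k + m + 1 - (m * k + 1) = m by omega, nsmul_eq_mul] at h
  have hfirst : ((m : ℝ) - 1) * lam (m - 1) ≤ ∑ j ∈ Icc 1 (m - 1), lam j := by
    have hle : m - 1 ≤ m * (k + 1) :=
      (Nat.sub_le m 1).trans (Nat.le_mul_of_pos_right m k.succ_pos)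
    have h := nsmul_right_le_sum_Icc_of_antitoneOn (hanti.mono (Set.Icc_subset_Icc_right hle))
    rwa [show m - 1 + 1 - 1 = m - 1 by omega, nsmul_eq_mul, Nat.cast_pred (by omega)] at h
  simp only [add_tsub_cancel_right] at hsum ⊢
  rw [ge_iff_le, div_le_div_iff₀ (by positivity) hpos]
  linarith

/-- Eigenvalue distance bound: under the sum condition,
λ_{m(n-1)+1}/λ_{m-1} ≥ (m-1)/m. -/
theorem eigenvalue_ratio_bound (m n : ℕ) (hm : 2 ≤ m) (hmn : m ≤ n) (lam : ℕ → ℝ)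
    (hmono : ∀ i j, 1 ≤ i → i ≤ j → j ≤ m*n → lam j ≤ lam i)
    (hnonneg : ∀ i, 1 ≤ i → i ≤ m*n → 0 ≤ lam i)
    (hsum : ∑ j ∈ Finset.Icc (m*(n-1)+1) (m*n), lam j ≥ ∑ j ∈ Finset.Icc 1 (m-1), lam j)
    (hpos : 0 < lam (m-1)) :
    lam (m*(n-1)+1) / lam (m-1) ≥ ((m:ℝ)-1)/(m:ℝ) :=
  eigenvalue_ratio_bound_general m n hm hmn lam hmono hsum hpos
end

section
/- Let m, n be integers with 2 ≤ m ≤ n, and let λ_1 ≥ ⋯ ≥ λ_{mn} ≥ 0 with ∑_{i=1}^{mn} λ_i = 1. If λ_{mn} + λ_{mn-1} + ⋯ + λ_{m(n-1)+1} ≥ λ_1 + ⋯ + λ_{m-1}, then ((m-1)/m)^2 λ_{m-1}^2 ≤ (∑_{i=1}^{mn} λ_i^2 − λ_1^2) / (mn − 1). -/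
/-!
Let `s` be the last `m` indices `m(n-1)+1, …, mn` and `u = {2, …, mn}`. Monotonicity and the
hypothesis give `(m-1) λ_{m-1} ≤ λ_1 + ⋯ + λ_{m-1} ≤ ∑_{s} λ`. By Cauchy–Schwarz the squared mean
of `λ` over `s` is at most the mean of `λ²` over `s`, and since the `λ_i` with `i ∈ s` are the
smallest ones in `u`, that mean is at most the mean of `λ²` over `u`, which is
`(tr ρ² - λ_1²)/(mn-1)`.
-/

open Finset

section MeanInequalities

variable {ι : Type*}

theorem card_mul_sum_le_card_mul_sum_of_forall_le {R : Type*} [CommSemiring R] [PartialOrder R]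
    [IsOrderedAddMonoid R] {s t : Finset ι} {g : ι → R} (h : ∀ i ∈ s, ∀ j ∈ t, g i ≤ g j) :
    #t * ∑ i ∈ s, g i ≤ #s * ∑ j ∈ t, g j :=
  calc (#t : R) * ∑ i ∈ s, g i = ∑ i ∈ s, ∑ _j ∈ t, g i := by
        simp only [sum_const, nsmul_eq_mul, mul_sum]
    _ ≤ ∑ _i ∈ s, ∑ j ∈ t, g j := sum_le_sum fun i hi ↦ sum_le_sum fun j hj ↦ h i hi j hj
    _ = #s * ∑ j ∈ t, g j := by rw [sum_const, nsmul_eq_mul]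

theorem sq_sum_div_card_le_sum_sq_div_card [DecidableEq ι] {s u : Finset ι} (hsu : s ⊆ u)
    {f : ι → ℝ} (hf : ∀ i ∈ s, 0 ≤ f i) (h : ∀ i ∈ s, ∀ j ∈ u \ s, f i ≤ f j) :
    ((∑ i ∈ s, f i) / #s) ^ 2 ≤ (∑ i ∈ u, f i ^ 2) / #u := by
  rcases s.eq_empty_or_nonempty with rfl | hs
  · simpa using div_nonneg (sum_nonneg fun i _ ↦ sq_nonneg (f i)) (Nat.cast_nonneg #u)
  have hs_pos : (0 : ℝ) < #s := by exact_mod_cast hs.card_pos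
  have hu_pos : (0 : ℝ) < #u := by exact_mod_cast (hs.mono hsu).card_pos
  have hsq : ∀ i ∈ s, ∀ j ∈ u \ s, f i ^ 2 ≤ f j ^ 2 := fun i hi j hj ↦
    pow_le_pow_left₀ (hf i hi) (h i hi j hj) 2
  have hsplit : ∀ g : ι → ℝ, ∑ i ∈ u, g i = ∑ i ∈ s, g i + ∑ j ∈ u \ s, g j := fun g ↦
    by rw [← sum_sdiff hsu, add_comm]
  have hcard : (#u : ℝ) = #s + #(u \ s) := by
    rw [← Nat.cast_add, add_comm, card_sdiff_add_card_eq_card hsu]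
  have hcs := sq_sum_le_card_mul_sum_sq (s := s) (f := f)
  have hlow := card_mul_sum_le_card_mul_sum_of_forall_le hsq
  calc ((∑ i ∈ s, f i) / #s) ^ 2 ≤ (∑ i ∈ s, f i ^ 2) / #s := by
        rw [div_pow, div_le_div_iff₀ (by positivity) hs_pos]; nlinarith
    _ ≤ (∑ i ∈ u, f i ^ 2) / #u := by
        rw [div_le_div_iff₀ hs_pos hu_pos, hsplit, hcard]; nlinarith

end MeanInequalities

theorem mul_le_sum_Icc_one_of_forall_le {f : ℕ → ℝ} {k : ℕ} (h : ∀ i ∈ Icc 1 k, f k ≤ f i) :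
    k * f k ≤ ∑ i ∈ Icc 1 k, f i := by
  simpa using card_nsmul_le_sum (Icc 1 k) f (f k) h

theorem purity_bound_one_general (m n : ℕ) (hm : 2 ≤ m) (hmn : m ≤ n) (lam : ℕ → ℝ)
    (hmono : ∀ i j, 1 ≤ i → i ≤ j → j ≤ m*n → lam j ≤ lam i)
    (hnonneg : ∀ i, 1 ≤ i → i ≤ m*n → 0 ≤ lam i)
    (hsum : ∑ j ∈ Finset.Icc (m*(n-1)+1) (m*n), lam j ≥ ∑ j ∈ Finset.Icc 1 (m-1), lam j) :
    (((m:ℝ)-1)/(m:ℝ))^2 * (lam (m-1))^2 ≤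
      ((∑ i ∈ Finset.Icc 1 (m*n), (lam i)^2) - (lam 1)^2) / ((m:ℝ)*(n:ℝ) - 1) := by
  have hmn_le : m ≤ m * (n - 1) := Nat.le_mul_of_pos_right m (by omega)
  have hm_le : m ≤ m * n := Nat.le_mul_of_pos_right m (by omega)
  have hmn_eq : m * n = m * (n - 1) + m := by
    rw [← Nat.mul_add_one, Nat.sub_add_cancel (by omega)]
  set s := Icc (m * (n - 1) + 1) (m * n)
  set u := Ioc 1 (m * n)
  have hcard_s : #s = m := by simp only [s, Nat.card_Icc]; omega
  have hcard_u : (#u : ℝ) = m * n - 1 := by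
    rw [Nat.card_Ioc, Nat.cast_sub (by omega), Nat.cast_mul, Nat.cast_one]
  have hsu : s ⊆ u := fun i hi ↦ by simp only [s, u, mem_Icc, mem_Ioc] at hi ⊢; omega
  have hlow : ((m : ℝ) - 1) * lam (m - 1) ≤ ∑ j ∈ s, lam j := by
    have := mul_le_sum_Icc_one_of_forall_le fun i hi ↦
      hmono i (m - 1) (mem_Icc.1 hi).1 (mem_Icc.1 hi).2 (by omega)
    rw [Nat.cast_sub (by omega), Nat.cast_one] at this
    exact this.trans hsum
  have hmean := sq_sum_div_card_le_sum_sq_div_card hsu (f := lam)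
    (fun i hi ↦ by simp only [s, mem_Icc] at hi; exact hnonneg i (by omega) hi.2)
    (fun i hi j hj ↦ by
      simp only [s, u, mem_sdiff, mem_Icc, mem_Ioc, not_and_or] at hi hj
      exact hmono j i (by omega) (by omega) hi.2)
  rw [hcard_s, hcard_u] at hmean
  have hsplit : ∑ i ∈ Icc 1 (m * n), lam i ^ 2 - lam 1 ^ 2 = ∑ i ∈ u, lam i ^ 2 := by
    rw [Icc_eq_cons_Ioc (by omega), sum_cons, add_sub_cancel_left]
  have hL : 0 ≤ ((m : ℝ) - 1) * lam (m - 1) :=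
    mul_nonneg (sub_nonneg.2 (by exact_mod_cast (by omega : 1 ≤ m)))
      (hnonneg _ (by omega) (by omega))
  calc (((m : ℝ) - 1) / m) ^ 2 * lam (m - 1) ^ 2 = (((m : ℝ) - 1) * lam (m - 1) / m) ^ 2 := by
        ring
    _ ≤ ((∑ j ∈ s, lam j) / m) ^ 2 := by gcongr
    _ ≤ _ := by rwa [hsplit]

/-- Purity bound: ((m-1)/m)² λ_{m-1}² ≤ (tr(ρ²) - λ_1²)/(mn-1). -/
theorem purity_bound_one (m n : ℕ) (hm : 2 ≤ m) (hmn : m ≤ n) (lam : ℕ → ℝ)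
    (hmono : ∀ i j, 1 ≤ i → i ≤ j → j ≤ m*n → lam j ≤ lam i)
    (hnonneg : ∀ i, 1 ≤ i → i ≤ m*n → 0 ≤ lam i)
    (hsum1 : ∑ i ∈ Finset.Icc 1 (m*n), lam i = 1)
    (hsum : ∑ j ∈ Finset.Icc (m*(n-1)+1) (m*n), lam j ≥ ∑ j ∈ Finset.Icc 1 (m-1), lam j) :
    (((m:ℝ)-1)/(m:ℝ))^2 * (lam (m-1))^2 ≤
      ((∑ i ∈ Finset.Icc 1 (m*n), (lam i)^2) - (lam 1)^2) / ((m:ℝ)*(n:ℝ) - 1) :=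
  purity_bound_one_general m n hm hmn lam hmono hnonneg hsum
end

section
/- Let m, n be integers with 2 ≤ m ≤ n, and let λ_1 ≥ ⋯ ≥ λ_{mn} ≥ 0 with ∑ λ_i = 1. If λ_{mn} + λ_{mn-1} + ⋯ + λ_{m(n-1)+1} ≥ λ_1 + ⋯ + λ_{m-1}, then ∑_{i=1}^{mn} λ_i^2 ≥ (((m-1)/m)^2 (mn − 1) + 1) λ_{m-1}^2. -/
/-!
Write `L = λ_{m-1}` and `c = (m-1)/m · L`. By monotonicity the first `m-1` terms are at
least `L`, so the last block of `m` terms has sum at least `(m-1)L`. Cauchy–Schwarz then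
bounds the squares of that block from below by `((m-1)L)²/m = m c²`, and the largest term
of the block, `λ_{m(n-1)+1}`, is at least its average, hence at least `c`. Consequently every
`λ_i` with `i ≤ m(n-1)` is at least `c`; keeping `λ_1² ≥ L²` separately gives
`∑ λ_i² ≥ L² + (m(n-1) - 1) c² + m c² = L² + (mn - 1) c²`.
-/

open Finset

section AntitoneBlocks

variable {f : ℕ → ℝ} {a b : ℕ}

lemma sum_Icc_le_mul_left_of_antitoneOn (hf : AntitoneOn f (Set.Icc a b)) :
    ∑ i ∈ Icc a b, f i ≤ ((b + 1 - a : ℕ) : ℝ) * f a := by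
  rw [← Nat.card_Icc, ← nsmul_eq_mul]
  refine sum_le_card_nsmul _ _ _ fun i hi => ?_
  have hi' : i ∈ Set.Icc a b := by simpa using hi
  exact hf ⟨le_rfl, hi'.1.trans hi'.2⟩ hi' hi'.1

lemma mul_right_le_sum_Icc_of_antitoneOn (hf : AntitoneOn f (Set.Icc a b)) :
    ((b + 1 - a : ℕ) : ℝ) * f b ≤ ∑ i ∈ Icc a b, f i := by
  rw [← Nat.card_Icc, ← nsmul_eq_mul]
  refine card_nsmul_le_sum _ _ _ fun i hi => ?_
  have hi' : i ∈ Set.Icc a b := by simpa using hi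
  exact hf hi' ⟨hi'.1.trans hi'.2, le_rfl⟩ hi'.2

end AntitoneBlocks

lemma sq_div_card_le_sum_sq {ι : Type*} {s : Finset ι} {f : ι → ℝ} {x : ℝ} (hx : 0 ≤ x)
    (h : x ≤ ∑ i ∈ s, f i) : x ^ 2 / #s ≤ ∑ i ∈ s, f i ^ 2 :=
  div_le_of_le_mul₀ (Nat.cast_nonneg _) (sum_nonneg fun _ _ => sq_nonneg _) <|
    (mul_comm (#s : ℝ) _ ▸ (pow_le_pow_left₀ hx h 2).trans sq_sum_le_card_mul_sum_sq)

lemma sq_add_mul_sq_le_sum_sq_Icc {f : ℕ → ℝ} {N : ℕ} {c : ℝ} (hN : 1 ≤ N) (hc : 0 ≤ c)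
    (hcf : ∀ i ∈ Ioc 1 N, c ≤ f i) :
    f 1 ^ 2 + ((N : ℝ) - 1) * c ^ 2 ≤ ∑ i ∈ Icc 1 N, f i ^ 2 := by
  rw [← add_sum_Ioc_eq_sum_Icc hN]
  have hcard : ((N : ℝ) - 1) * c ^ 2 = #(Ioc 1 N) • c ^ 2 := by
    rw [Nat.card_Ioc, nsmul_eq_mul, Nat.cast_sub hN, Nat.cast_one]
  rw [hcard]
  gcongr
  exact card_nsmul_le_sum _ _ _ fun i hi => pow_le_pow_left₀ hc (hcf i hi) 2

section TailBlock

variable {f : ℕ → ℝ} {m N : ℕ}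

lemma mul_le_sum_tail_block (hm : 1 ≤ m) (hf : AntitoneOn f (Set.Icc 1 (N + m)))
    (hblock : ∑ j ∈ Icc 1 (m - 1), f j ≤ ∑ j ∈ Icc (N + 1) (N + m), f j) :
    ((m : ℝ) - 1) * f (m - 1) ≤ ∑ j ∈ Icc (N + 1) (N + m), f j := by
  refine le_trans ?_ ((mul_right_le_sum_Icc_of_antitoneOn
    (hf.mono (Set.Icc_subset_Icc le_rfl (by omega)))).trans hblock)
  rw [show m - 1 + 1 - 1 = m - 1 by omega, Nat.cast_sub hm, Nat.cast_one]

lemma div_mul_le_apply_of_tail_block (hm : 1 ≤ m) (hf : AntitoneOn f (Set.Icc 1 (N + m)))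
    (hblock : ∑ j ∈ Icc 1 (m - 1), f j ≤ ∑ j ∈ Icc (N + 1) (N + m), f j)
    {i : ℕ} (hi : i ∈ Icc 1 (N + 1)) :
    ((m : ℝ) - 1) / m * f (m - 1) ≤ f i := by
  rw [mem_Icc] at hi
  have hm0 : (0 : ℝ) < m := by positivity
  have hlead := (mul_le_sum_tail_block hm hf hblock).trans
    (sum_Icc_le_mul_left_of_antitoneOn (hf.mono (Set.Icc_subset_Icc (by omega) le_rfl)))
  rw [show N + m + 1 - (N + 1) = m by omega, ← div_le_iff₀' hm0] at hlead
  rw [div_mul_eq_mul_div]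
  exact hlead.trans (hf ⟨hi.1, by omega⟩ ⟨by omega, by omega⟩ hi.2)

theorem sq_add_mul_sq_le_sum_sq_of_tail_block (hm : 2 ≤ m) (hN : 1 ≤ N)
    (hf : AntitoneOn f (Set.Icc 1 (N + m))) (hL : 0 ≤ f (m - 1))
    (hblock : ∑ j ∈ Icc 1 (m - 1), f j ≤ ∑ j ∈ Icc (N + 1) (N + m), f j) :
    f (m - 1) ^ 2 + ((N : ℝ) - 1 + m) * (((m : ℝ) - 1) / m * f (m - 1)) ^ 2 ≤
      ∑ i ∈ Icc 1 (N + m), f i ^ 2 := by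
  have hm1 : (0 : ℝ) ≤ m - 1 := by rw [sub_nonneg]; exact_mod_cast (by omega : 1 ≤ m)
  have hhead := sq_add_mul_sq_le_sum_sq_Icc hN (mul_nonneg (div_nonneg hm1 (by positivity)) hL)
    fun i hi => div_mul_le_apply_of_tail_block (by omega) hf hblock (Ioc_subset_Icc_self.trans
      (Icc_subset_Icc le_rfl (by omega)) hi)
  have htail :=
    sq_div_card_le_sum_sq (mul_nonneg hm1 hL) (mul_le_sum_tail_block (by omega) hf hblock)
  rw [Nat.card_Icc, show N + m + 1 - (N + 1) = m by omega] at htail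
  have hL1 : f (m - 1) ^ 2 ≤ f 1 ^ 2 :=
    pow_le_pow_left₀ hL (hf ⟨le_rfl, by omega⟩ ⟨by omega, by omega⟩ (by omega)) 2
  have hsplit : Icc 1 (N + m) = Icc 1 N ∪ Icc (N + 1) (N + m) := by
    ext i; simp only [mem_union, mem_Icc]; omega
  rw [hsplit, sum_union (disjoint_left.2 fun i hi hi' => by simp only [mem_Icc] at hi hi'; omega)]
  have hsq : (m : ℝ) * (((m : ℝ) - 1) / m * f (m - 1)) ^ 2 =
      (((m : ℝ) - 1) * f (m - 1)) ^ 2 / m := by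
    field_simp
  linarith

end TailBlock

theorem purity_bound_two_general (m n : ℕ) (hm : 2 ≤ m) (hmn : m ≤ n) (lam : ℕ → ℝ)
    (hmono : ∀ i j, 1 ≤ i → i ≤ j → j ≤ m*n → lam j ≤ lam i)
    (hnonneg : ∀ i, 1 ≤ i → i ≤ m*n → 0 ≤ lam i)
    (hsum : ∑ j ∈ Finset.Icc (m*(n-1)+1) (m*n), lam j ≥ ∑ j ∈ Finset.Icc 1 (m-1), lam j) :
    ∑ i ∈ Finset.Icc 1 (m*n), (lam i)^2 ≥
      ((((m:ℝ)-1)/(m:ℝ))^2 * ((m:ℝ)*(n:ℝ) - 1) + 1) * (lam (m-1))^2 := by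
  have hmn' : m * n = m * (n - 1) + m := by rw [← Nat.mul_add_one]; congr; omega
  have hf : AntitoneOn lam (Set.Icc 1 (m * n)) := fun i hi j hj hij => hmono i j hi.1 hij hj.2
  rw [hmn'] at hf hsum ⊢
  have key := sq_add_mul_sq_le_sum_sq_of_tail_block hm
    (le_mul_of_le_of_one_le (by omega) (by omega)) hf
    (hnonneg _ (by omega) (by rw [hmn']; omega)) hsum
  push_cast [Nat.cast_sub (by omega : 1 ≤ n)] at key
  exact le_of_eq_of_le (by ring) key

/-- Purity bound: tr(ρ²) ≥ (((m-1)/m)² (mn-1) + 1) λ_{m-1}². -/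
theorem purity_bound_two (m n : ℕ) (hm : 2 ≤ m) (hmn : m ≤ n) (lam : ℕ → ℝ)
    (hmono : ∀ i j, 1 ≤ i → i ≤ j → j ≤ m*n → lam j ≤ lam i)
    (hnonneg : ∀ i, 1 ≤ i → i ≤ m*n → 0 ≤ lam i)
    (hsum1 : ∑ i ∈ Finset.Icc 1 (m*n), lam i = 1)
    (hsum : ∑ j ∈ Finset.Icc (m*(n-1)+1) (m*n), lam j ≥ ∑ j ∈ Finset.Icc 1 (m-1), lam j) :
    ∑ i ∈ Finset.Icc 1 (m*n), (lam i)^2 ≥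
      ((((m:ℝ)-1)/(m:ℝ))^2 * ((m:ℝ)*(n:ℝ) - 1) + 1) * (lam (m-1))^2 :=
  purity_bound_two_general m n hm hmn lam hmono hnonneg hsum
end

section
/- Let λ_1 ≥ λ_2 ≥ ⋯ ≥ λ_N ≥ 0 with ∑_{i=1}^N λ_i = 1 and N ≥ 2. Then λ_1² ≤ 4(∑_{i=1}^N λ_i² − λ_1²)/(N−1) implies ∑_{i=1}^N λ_i² ≤ 4/(N+3). -/
/-! Since `λ_i² ≤ λ_1 λ_i`, the purity `P` is at most `λ_1`. The hypothesis rearranges to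
`(N + 3) λ_1² ≤ 4 P`, hence `(N + 3) P² ≤ 4 P`, which is the claim after dividing by `P`. -/

open Finset

theorem Finset.sum_sq_le_mul_sum {ι R : Type*} [CommSemiring R] [PartialOrder R]
    [IsOrderedRing R] (s : Finset ι) (f : ι → R) (c : R)
    (hf : ∀ i ∈ s, 0 ≤ f i) (hfc : ∀ i ∈ s, f i ≤ c) :
    ∑ i ∈ s, f i ^ 2 ≤ c * ∑ i ∈ s, f i := by
  rw [mul_sum]
  exact sum_le_sum fun i hi => by
    rw [sq]
    exact mul_le_mul_of_nonneg_right (hfc i hi) (hf i hi)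

theorem le_div_of_mul_sq_le_of_le {K : Type*} [Field K] [LinearOrder K] [IsStrictOrderedRing K]
    {p a b c : K} (hp : 0 ≤ p) (hpa : p ≤ a) (hb : 0 ≤ b) (hc : 0 < c)
    (h : c * a ^ 2 ≤ b * p) : p ≤ b / c := by
  rw [le_div_iff₀ hc]
  rcases hp.eq_or_lt with rfl | hp
  · simpa using hb
  · have hsq : c * p ^ 2 ≤ b * p := (mul_le_mul_of_nonneg_left (pow_le_pow_left₀ hp.le hpa 2)
      hc.le).trans h
    nlinarith

/-- If λ_1² ≤ 4(P - λ_1²)/(N-1) then the purity P satisfies P ≤ 4/(N+3). -/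
theorem purity_le_of_maxEigenvalue_bound (N : ℕ) (hN : 2 ≤ N) (lam : ℕ → ℝ)
    (hmono : ∀ i j, 1 ≤ i → i ≤ j → j ≤ N → lam j ≤ lam i)
    (hnonneg : ∀ i, 1 ≤ i → i ≤ N → 0 ≤ lam i)
    (hsum : ∑ i ∈ Finset.Icc 1 N, lam i = 1)
    (h : (lam 1)^2 ≤ 4 * ((∑ i ∈ Finset.Icc 1 N, (lam i)^2) - (lam 1)^2) / ((N:ℝ) - 1)) :
    ∑ i ∈ Finset.Icc 1 N, (lam i)^2 ≤ 4 / ((N:ℝ) + 3) := by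
  set P := ∑ i ∈ Icc 1 N, lam i ^ 2
  have hP : 0 ≤ P := sum_nonneg fun i _ => sq_nonneg (lam i)
  have hPle : P ≤ lam 1 := by
    have := sum_sq_le_mul_sum (Icc 1 N) lam (lam 1)
      (fun i hi => hnonneg i (mem_Icc.1 hi).1 (mem_Icc.1 hi).2)
      (fun i hi => hmono 1 i le_rfl (mem_Icc.1 hi).1 (mem_Icc.1 hi).2)
    rwa [hsum, mul_one] at this
  have hN1 : (0 : ℝ) < N - 1 := by
    have : (2 : ℝ) ≤ N := by exact_mod_cast hN
    linarith
  have hmax : ((N : ℝ) + 3) * lam 1 ^ 2 ≤ 4 * P := by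
    have := (le_div_iff₀ hN1).1 h
    linarith
  exact le_div_of_mul_sq_le_of_le hP hPle (by norm_num) (by positivity) hmax
end

section
/- Let λ_1 ≥ λ_2 ≥ ⋯ ≥ λ_N ≥ 0 with ∑ λ_i = 1 and N ≥ 2. Fix an integer k with 2 ≤ k ≤ N and suppose 1/k ≤ ∑ λ_i² ≤ 1/(k−1). Then λ_1 ≥ (1/k)(1 + √((k·∑λ_i² − 1)/(k−1))). -/
/-!
Fix `a = λ₁`. Among vectors with entries in `[0, a]` and total mass `m a + t` (`t ≤ a`), the
sum of squares is largest for `(a, …, a, t, 0, …)`: replacing two entries `u ≥ t` and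
`a + t - u` by `a` and `t` increases it by `2 (a - u) (u - t) ≥ 0`. With `m = k - 1` and
`t = 1 - (k - 1) a` (so `t ≤ a` because `1/k ≤ P ≤ a`) this gives `P ≤ (k - 1) a² + t²`, which
rearranges to `(k P - 1) / (k - 1) ≤ (k a - 1)²`.
-/

open Finset

namespace Finset

variable {ι : Type*} {s : Finset ι} {x : ι → ℝ}

theorem sum_sq_le_mul_sum_of_le {c : ℝ} (hx0 : ∀ i ∈ s, 0 ≤ x i)
    (hxc : ∀ i ∈ s, x i ≤ c) :
    ∑ i ∈ s, x i ^ 2 ≤ c * ∑ i ∈ s, x i := by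
  rw [mul_sum]
  exact sum_le_sum fun i hi => by nlinarith [hx0 i hi, hxc i hi]

theorem sum_sq_le_of_le_of_sum_eq (m : ℕ) {a t : ℝ} (ha : 0 ≤ a) (ht : t ≤ a)
    (hx0 : ∀ i ∈ s, 0 ≤ x i) (hxa : ∀ i ∈ s, x i ≤ a)
    (hsum : ∑ i ∈ s, x i = m * a + t) :
    ∑ i ∈ s, x i ^ 2 ≤ m * a ^ 2 + t ^ 2 := by
  induction m generalizing s t with
  | zero =>
    rw [Nat.cast_zero, zero_mul, zero_add] at hsum
    have hxt : ∀ i ∈ s, x i ≤ t := fun i hi => hsum ▸ single_le_sum hx0 hi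
    calc ∑ i ∈ s, x i ^ 2 ≤ t * ∑ i ∈ s, x i := sum_sq_le_mul_sum_of_le hx0 hxt
      _ = (0 : ℕ) * a ^ 2 + t ^ 2 := by rw [hsum]; push_cast; ring
  | succ m ih =>
    classical
    by_cases hbig : ∃ j ∈ s, t ≤ x j
    · obtain ⟨j, hj, htj⟩ := hbig
      have hrest : ∑ i ∈ s.erase j, x i = m * a + (a + t - x j) := by
        have := add_sum_erase s x hj
        push_cast at hsum
        linarith
      have hih := ih (s := s.erase j) (by linarith) (fun i hi => hx0 i (mem_of_mem_erase hi))
        (fun i hi => hxa i (mem_of_mem_erase hi)) hrest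
      rw [← add_sum_erase s _ hj]
      push_cast
      nlinarith [mul_nonneg (sub_nonneg.2 (hxa j hj)) (sub_nonneg.2 htj)]
    · push Not at hbig
      calc ∑ i ∈ s, x i ^ 2 ≤ t * ∑ i ∈ s, x i :=
            sum_sq_le_mul_sum_of_le hx0 fun i hi => (hbig i hi).le
        _ ≤ (m + 1 : ℕ) * a ^ 2 + t ^ 2 := by
          rw [hsum]
          push_cast
          have hm : (0 : ℝ) ≤ m + 1 := m.cast_add_one_pos.le
          nlinarith [mul_nonneg (mul_nonneg hm ha) (sub_nonneg.2 ht)]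

end Finset

theorem maxEigenvalue_lower_bound_general (N : ℕ) (lam : ℕ → ℝ)
    (hmono : ∀ i j, 1 ≤ i → i ≤ j → j ≤ N → lam j ≤ lam i)
    (hnonneg : ∀ i, 1 ≤ i → i ≤ N → 0 ≤ lam i)
    (hsum : ∑ i ∈ Finset.Icc 1 N, lam i = 1)
    (k : ℕ) (hk2 : 2 ≤ k)
    (hP1 : 1 / (k:ℝ) ≤ ∑ i ∈ Finset.Icc 1 N, (lam i)^2) :
    lam 1 ≥ (1 / (k:ℝ)) *
      (1 + Real.sqrt (((k:ℝ) * (∑ i ∈ Finset.Icc 1 N, (lam i)^2) - 1) / ((k:ℝ) - 1))) := by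
  set P := ∑ i ∈ Finset.Icc 1 N, (lam i)^2
  have hk : ((k - 1 : ℕ) : ℝ) = k - 1 := Nat.cast_pred (by omega)
  have hk1 : (1 : ℝ) < k := by exact_mod_cast hk2
  have hx0 : ∀ i ∈ Icc 1 N, 0 ≤ lam i := fun i hi => hnonneg i (mem_Icc.1 hi).1 (mem_Icc.1 hi).2
  have hxa : ∀ i ∈ Icc 1 N, lam i ≤ lam 1 := fun i hi =>
    hmono 1 i le_rfl (mem_Icc.1 hi).1 (mem_Icc.1 hi).2
  have hPa : P ≤ lam 1 := by simpa [hsum] using sum_sq_le_mul_sum_of_le hx0 hxa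
  have ha0 : 0 ≤ lam 1 := (hP1.trans hPa).trans' (by positivity)
  have hka : 1 ≤ k * lam 1 := by
    rw [div_le_iff₀' (by positivity)] at hP1
    exact hP1.trans (by gcongr)
  have hP : P ≤ (k - 1) * lam 1 ^ 2 + (1 - (k - 1) * lam 1) ^ 2 := by
    have := sum_sq_le_of_le_of_sum_eq (k - 1) ha0 (t := 1 - (k - 1) * lam 1) (by linarith)
      hx0 hxa (by rw [hsum, hk]; ring)
    rwa [hk] at this
  have hsqrt : Real.sqrt ((k * P - 1) / (k - 1)) ≤ k * lam 1 - 1 := by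
    rw [Real.sqrt_le_left (by linarith), div_le_iff₀ (by linarith)]
    nlinarith
  rw [ge_iff_le, one_div_mul_eq_div, div_le_iff₀' (by positivity)]
  linarith

/-- Sharp lower bound on the maximal eigenvalue in terms of the purity:
if 1/k ≤ P ≤ 1/(k-1) then λ_1 ≥ (1/k)(1 + √((kP-1)/(k-1))). -/
theorem maxEigenvalue_lower_bound (N : ℕ) (hN : 2 ≤ N) (lam : ℕ → ℝ)
    (hmono : ∀ i j, 1 ≤ i → i ≤ j → j ≤ N → lam j ≤ lam i)
    (hnonneg : ∀ i, 1 ≤ i → i ≤ N → 0 ≤ lam i)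
    (hsum : ∑ i ∈ Finset.Icc 1 N, lam i = 1)
    (k : ℕ) (hk2 : 2 ≤ k) (hkN : k ≤ N)
    (hP1 : 1 / (k:ℝ) ≤ ∑ i ∈ Finset.Icc 1 N, (lam i)^2)
    (hP2 : ∑ i ∈ Finset.Icc 1 N, (lam i)^2 ≤ 1 / ((k:ℝ) - 1)) :
    lam 1 ≥ (1 / (k:ℝ)) *
      (1 + Real.sqrt (((k:ℝ) * (∑ i ∈ Finset.Icc 1 N, (lam i)^2) - 1) / ((k:ℝ) - 1))) :=
  maxEigenvalue_lower_bound_general N lam hmono hnonneg hsum k hk2 hP1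
end
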